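/- arXiv:2001.09302 — 2 statements merged into one kernel-verified Lean document; each statement's English description precedes it below -/
import Mathlib

section
/- Let $(X_1, X_2)$ be a centered bivariate Gaussian vector with unit variances and correlation $\rho \in (-1,1)$, with joint density $\varphi_\rho$. Let $c_1, c_2$ be real constants and $a \in (\rho, 1]$, and set $\lambda_1 = (1-a\rho)/(1-\rho^2)$, $\lambda_2 = (a-\rho)/(1-\rho^2)$. Then as $u \to \infty$, $\mathbb{P}(X_1 > u + c_1, X_2 > au + c_2) \sim \frac{1}{\lambda_1 \lambda_2 u^2} \varphi_\rho(u + c_1, au + c_2)$. -/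
open MeasureTheory ProbabilityTheory Filter Set
open scoped ENNReal NNReal

noncomputable section

/-- A (two-sided) standard Brownian motion: `W 0 = 0`, continuous paths,
centered Gaussian increments with variance `t - s`, and independent increments. -/
def IsStandardBM {Ω : Type*} [MeasurableSpace Ω] (P : Measure Ω) (W : ℝ → Ω → ℝ) : Prop :=
  (∀ t, Measurable (W t)) ∧
  (∀ ω, W 0 ω = 0) ∧
  (∀ ω, Continuous fun t => W t ω) ∧
  (∀ s t : ℝ, s ≤ t →
    P.map (fun ω => W t ω - W s ω) = gaussianReal 0 (t - s).toNNReal) ∧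
  (∀ n : ℕ, ∀ t : ℕ → ℝ, Monotone t →
    iIndepFun
      (fun i : Fin n => fun ω => W (t (i + 1)) ω - W (t i) ω) P)

/-- Density of a centered bivariate Gaussian vector with unit variances and
correlation `ρ`. -/
def phiRho (ρ x y : ℝ) : ℝ :=
  (1 / (2 * Real.pi * Real.sqrt (1 - ρ ^ 2))) *
    Real.exp (-(x ^ 2 - 2 * ρ * x * y + y ^ 2) / (2 * (1 - ρ ^ 2)))

/-!
Expanding the quadratic form around the corner `(x, y)` gives
`phiRho ρ (x + s) (y + t) = phiRho ρ x y * exp (-(α s + β t)) * exp (-Q s t)` with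
`α = phiRhoRate ρ x y`, `β = phiRhoRate ρ y x` and `0 ≤ Q s t ≤ (s² + t²) / (1 - ρ²)`.
Bounding `exp (-Q)` between `1 - Q` and `1` and integrating over the quadrant `s, t > 0` gives
`M * (1 - 2 (α⁻² + β⁻²) / (1 - ρ²)) ≤ P(X₁ > x, X₂ > y) ≤ M` for `M = phiRho ρ x y / (α β)`,
so the tail is asymptotic to `M` as soon as `α, β → ∞`. Along `x = u + c₁`, `y = a u + c₂` the
rates are `λ₁ u + O(1)` and `λ₂ u + O(1)`, and `a ∈ (ρ, 1]` makes `λ₁, λ₂ > 0`.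
-/

open Real Asymptotics Topology

/-- The decay rate of `phiRho ρ` in its first argument: `-∂ₓ log phiRho ρ x y`. -/
def phiRhoRate (ρ x y : ℝ) : ℝ := (x - ρ * y) / (1 - ρ ^ 2)

def bivariateGaussian (ρ : ℝ) : Measure (ℝ × ℝ) :=
  volume.withDensity fun z => ENNReal.ofReal (phiRho ρ z.1 z.2)

section Density

variable {ρ : ℝ}

lemma phiRho_nonneg (ρ x y : ℝ) : 0 ≤ phiRho ρ x y := by
  unfold phiRho
  have := pi_pos
  positivity

lemma phiRho_pos (hρ : ρ ^ 2 < 1) (x y : ℝ) : 0 < phiRho ρ x y := by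
  unfold phiRho
  have := pi_pos
  have := sqrt_pos.2 (sub_pos.2 hρ)
  positivity

lemma continuous_phiRho (ρ : ℝ) : Continuous fun z : ℝ × ℝ => phiRho ρ z.1 z.2 := by
  unfold phiRho
  fun_prop

lemma phiRho_add (hρ : ρ ^ 2 ≠ 1) (x y s t : ℝ) :
    phiRho ρ (x + s) (y + t) =
      phiRho ρ x y * exp (-(phiRhoRate ρ x y * s)) * exp (-(phiRhoRate ρ y x * t)) *
        exp (-((s ^ 2 - 2 * ρ * s * t + t ^ 2) / (2 * (1 - ρ ^ 2)))) := by
  have : 1 - ρ ^ 2 ≠ 0 := sub_ne_zero.2 hρ.symm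
  unfold phiRho phiRhoRate
  simp only [mul_assoc, ← exp_add]
  congr 2
  field_simp
  ring

lemma phiRho_add_le (hρ : ρ ^ 2 < 1) (x y s t : ℝ) :
    phiRho ρ (x + s) (y + t) ≤
      phiRho ρ x y * exp (-(phiRhoRate ρ x y * s)) * exp (-(phiRhoRate ρ y x * t)) := by
  rw [phiRho_add hρ.ne]
  refine mul_le_of_le_one_right (by have := phiRho_nonneg ρ x y; positivity) ?_
  rw [exp_le_one_iff, neg_nonpos]
  refine div_nonneg ?_ (by linarith)
  nlinarith [sq_nonneg (s - ρ * t), sq_nonneg t]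

lemma le_phiRho_add (hρ : ρ ^ 2 < 1) (x y s t : ℝ) :
    phiRho ρ x y * exp (-(phiRhoRate ρ x y * s)) * exp (-(phiRhoRate ρ y x * t)) *
        (1 - (s ^ 2 + t ^ 2) / (1 - ρ ^ 2)) ≤ phiRho ρ (x + s) (y + t) := by
  rw [phiRho_add hρ.ne]
  refine mul_le_mul_of_nonneg_left ?_ (by have := phiRho_nonneg ρ x y; positivity)
  have hquad : (s ^ 2 - 2 * ρ * s * t + t ^ 2) / (2 * (1 - ρ ^ 2)) ≤
      (s ^ 2 + t ^ 2) / (1 - ρ ^ 2) := by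
    rw [div_le_div_iff₀ (by linarith) (by linarith)]
    nlinarith [sq_nonneg (s + ρ * t), sq_nonneg t, mul_nonneg (sub_pos.2 hρ).le (sq_nonneg t)]
  linarith [add_one_le_exp (-((s ^ 2 - 2 * ρ * s * t + t ^ 2) / (2 * (1 - ρ ^ 2))))]

end Density

lemma integral_pow_mul_exp_neg_mul_Ioi {r : ℝ} (hr : 0 < r) (n : ℕ) :
    ∫ t in Ioi (0 : ℝ), t ^ n * exp (-(r * t)) = n.factorial / r ^ (n + 1) := by
  have h := integral_rpow_mul_exp_neg_mul_Ioi (a := n + 1) (by positivity) hr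
  rw [add_sub_cancel_right, Gamma_nat_eq_factorial, ← Nat.cast_succ, rpow_natCast] at h
  simp only [rpow_natCast] at h
  rw [h, one_div_pow, one_div_mul_eq_div]

lemma integrableOn_pow_mul_exp_neg_mul_Ioi {r : ℝ} (hr : 0 < r) (n : ℕ) :
    IntegrableOn (fun t => t ^ n * exp (-(r * t))) (Ioi 0) :=
  .of_integral_ne_zero <| by
    rw [integral_pow_mul_exp_neg_mul_Ioi hr]
    exact div_ne_zero (by positivity) (by positivity)

lemma MeasureTheory.IntegrableOn.mul_prod {α β : Type*} [MeasurableSpace α] [MeasurableSpace β]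
    {μ : Measure α} {ν : Measure β} [SFinite μ] [SFinite ν] {f : α → ℝ} {g : β → ℝ}
    {s : Set α} {t : Set β} (hf : IntegrableOn f s μ) (hg : IntegrableOn g t ν) :
    IntegrableOn (fun z => f z.1 * g z.2) (s ×ˢ t) (μ.prod ν) := by
  rw [IntegrableOn, ← Measure.prod_restrict]
  exact Integrable.mul_prod hf hg

def expWeight (α β : ℝ) (m n : ℕ) (z : ℝ × ℝ) : ℝ :=
  z.1 ^ m * exp (-(α * z.1)) * (z.2 ^ n * exp (-(β * z.2)))

section ExpWeight

variable {α β : ℝ}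

lemma integrableOn_expWeight (hα : 0 < α) (hβ : 0 < β) (m n : ℕ) :
    IntegrableOn (expWeight α β m n) (Ioi 0 ×ˢ Ioi 0) := by
  rw [Measure.volume_eq_prod]
  exact (integrableOn_pow_mul_exp_neg_mul_Ioi hα m).mul_prod
    (integrableOn_pow_mul_exp_neg_mul_Ioi hβ n)

lemma integral_expWeight (hα : 0 < α) (hβ : 0 < β) (m n : ℕ) :
    ∫ z in Ioi 0 ×ˢ Ioi 0, expWeight α β m n z =
      m.factorial / α ^ (m + 1) * (n.factorial / β ^ (n + 1)) := by
  rw [Measure.volume_eq_prod]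
  unfold expWeight
  rw [setIntegral_prod_mul (fun s => s ^ m * exp (-(α * s))) (fun t => t ^ n * exp (-(β * t))),
    integral_pow_mul_exp_neg_mul_Ioi hα, integral_pow_mul_exp_neg_mul_Ioi hβ]

end ExpWeight

section Tail

variable {ρ x y : ℝ}

lemma bivariateGaussian_ne_zero (hρ : ρ ^ 2 < 1) : bivariateGaussian ρ ≠ 0 := by
  intro h
  rw [bivariateGaussian, withDensity_eq_zero_iff
    (continuous_phiRho ρ).measurable.ennreal_ofReal.aemeasurable] at h
  obtain ⟨z, hz⟩ := h.exists
  exact (ENNReal.ofReal_pos.2 (phiRho_pos hρ z.1 z.2)).ne' hz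

lemma toReal_bivariateGaussian_Ioi_prod_Ioi (ρ x y : ℝ) :
    (bivariateGaussian ρ (Ioi x ×ˢ Ioi y)).toReal =
      ∫ z in Ioi 0 ×ˢ Ioi 0, phiRho ρ (x + z.1) (y + z.2) := by
  have hshift : MeasurePreserving (fun z : ℝ × ℝ => (x, y) + z) :=
    measurePreserving_add_left volume (x, y)
  have hpre : (fun z : ℝ × ℝ => (x, y) + z) ⁻¹' (Ioi x ×ˢ Ioi y) = Ioi 0 ×ˢ Ioi 0 := by
    ext z
    simp
  rw [bivariateGaussian, withDensity_apply _ (measurableSet_Ioi.prod measurableSet_Ioi),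
    ← hshift.setLIntegral_comp_preimage_emb (MeasurableEquiv.addLeft (x, y)).measurableEmbedding,
    hpre, integral_eq_lintegral_of_nonneg_ae (ae_of_all _ fun z => phiRho_nonneg ρ _ _)]
  · rfl
  · exact ((continuous_phiRho ρ).comp (continuous_const_add (x, y))).aestronglyMeasurable

lemma integrableOn_phiRho_add (hρ : ρ ^ 2 < 1) (hα : 0 < phiRhoRate ρ x y)
    (hβ : 0 < phiRhoRate ρ y x) :
    IntegrableOn (fun z : ℝ × ℝ => phiRho ρ (x + z.1) (y + z.2)) (Ioi 0 ×ˢ Ioi 0) := by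
  refine ((integrableOn_expWeight hα hβ 0 0).const_mul (phiRho ρ x y)).mono'
    ((continuous_phiRho ρ).comp (continuous_const_add (x, y))).aestronglyMeasurable
    (ae_of_all _ fun z => ?_)
  rw [Real.norm_of_nonneg (phiRho_nonneg ρ _ _)]
  simpa [expWeight, mul_assoc] using phiRho_add_le hρ x y z.1 z.2

lemma toReal_bivariateGaussian_Ioi_prod_Ioi_le (hρ : ρ ^ 2 < 1) (hα : 0 < phiRhoRate ρ x y)
    (hβ : 0 < phiRhoRate ρ y x) :
    (bivariateGaussian ρ (Ioi x ×ˢ Ioi y)).toReal ≤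
      phiRho ρ x y / (phiRhoRate ρ x y * phiRhoRate ρ y x) := by
  set α := phiRhoRate ρ x y
  set β := phiRhoRate ρ y x
  rw [toReal_bivariateGaussian_Ioi_prod_Ioi]
  calc ∫ z in Ioi 0 ×ˢ Ioi 0, phiRho ρ (x + z.1) (y + z.2)
      ≤ ∫ z in Ioi 0 ×ˢ Ioi 0, phiRho ρ x y * expWeight α β 0 0 z :=
        setIntegral_mono_on (integrableOn_phiRho_add hρ hα hβ)
          ((integrableOn_expWeight hα hβ 0 0).const_mul _)
          (measurableSet_Ioi.prod measurableSet_Ioi) fun z _ => by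
            simpa [expWeight, mul_assoc] using phiRho_add_le hρ x y z.1 z.2
    _ = phiRho ρ x y / (α * β) := by
        rw [integral_const_mul, integral_expWeight hα hβ]
        simp only [Nat.factorial_zero, Nat.cast_one, zero_add, pow_one]
        field_simp

lemma le_toReal_bivariateGaussian_Ioi_prod_Ioi (hρ : ρ ^ 2 < 1) (hα : 0 < phiRhoRate ρ x y)
    (hβ : 0 < phiRhoRate ρ y x) :
    phiRho ρ x y / (phiRhoRate ρ x y * phiRhoRate ρ y x) *
        (1 - 2 / (1 - ρ ^ 2) * ((phiRhoRate ρ x y)⁻¹ ^ 2 + (phiRhoRate ρ y x)⁻¹ ^ 2)) ≤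
      (bivariateGaussian ρ (Ioi x ×ˢ Ioi y)).toReal := by
  set α := phiRhoRate ρ x y
  set β := phiRhoRate ρ y x
  set φ := phiRho ρ x y
  set c := 1 / (1 - ρ ^ 2)
  have hw : ∀ m n, IntegrableOn (expWeight α β m n) (Ioi 0 ×ˢ Ioi 0) :=
    integrableOn_expWeight hα hβ
  have hlower : ∀ z : ℝ × ℝ, φ * exp (-(α * z.1)) * exp (-(β * z.2)) *
      (1 - (z.1 ^ 2 + z.2 ^ 2) / (1 - ρ ^ 2)) =
        φ * expWeight α β 0 0 z - φ * c * expWeight α β 2 0 z - φ * c * expWeight α β 0 2 z := by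
    intro z
    simp only [expWeight, c]
    ring
  rw [toReal_bivariateGaussian_Ioi_prod_Ioi]
  calc φ / (α * β) * (1 - 2 / (1 - ρ ^ 2) * (α⁻¹ ^ 2 + β⁻¹ ^ 2))
      = ∫ z in Ioi 0 ×ˢ Ioi 0,
          φ * expWeight α β 0 0 z - φ * c * expWeight α β 2 0 z - φ * c * expWeight α β 0 2 z := by
        rw [integral_sub, integral_sub, integral_const_mul, integral_const_mul,
          integral_const_mul, integral_expWeight hα hβ, integral_expWeight hα hβ,
          integral_expWeight hα hβ]
        · simp only [c, Nat.factorial, Nat.cast_one]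
          field_simp
          ring
        exacts [(hw 0 0).const_mul _, (hw 2 0).const_mul _,
          ((hw 0 0).const_mul _).sub ((hw 2 0).const_mul _), (hw 0 2).const_mul _]
    _ ≤ ∫ z in Ioi 0 ×ˢ Ioi 0, phiRho ρ (x + z.1) (y + z.2) :=
        setIntegral_mono_on ((((hw 0 0).const_mul _).sub ((hw 2 0).const_mul _)).sub
          ((hw 0 2).const_mul _)) (integrableOn_phiRho_add hρ hα hβ)
          (measurableSet_Ioi.prod measurableSet_Ioi) fun z _ => by
            rw [← hlower]
            exact le_phiRho_add hρ x y z.1 z.2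

end Tail

lemma phiRhoRate_mul_add_mul_add (ρ p q c d u : ℝ) :
    phiRhoRate ρ (p * u + c) (q * u + d) = phiRhoRate ρ p q * u + phiRhoRate ρ c d := by
  simp only [phiRhoRate]
  ring

lemma isEquivalent_phiRhoRate_mul_add_mul_add {ρ p q : ℝ} (h : phiRhoRate ρ p q ≠ 0) (c d : ℝ) :
    (fun u => phiRhoRate ρ (p * u + c) (q * u + d)) ~[atTop] fun u => phiRhoRate ρ p q * u := by
  simp only [phiRhoRate_mul_add_mul_add]
  exact IsEquivalent.refl.add_isLittleO
    ((isLittleO_const_id_atTop _).trans_isBigO (isBigO_self_const_mul h id atTop))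

lemma measure_preimage_eq_bivariateGaussian {Ω : Type*} [MeasurableSpace Ω] {P : Measure Ω}
    {X : Ω → ℝ × ℝ} {ρ : ℝ} (hρ : ρ ^ 2 < 1) (hX : P.map X = bivariateGaussian ρ)
    {s : Set (ℝ × ℝ)} (hs : MeasurableSet s) : P (X ⁻¹' s) = bivariateGaussian ρ s := by
  rw [← hX, Measure.map_apply_of_aemeasurable
    (.of_map_ne_zero (hX ▸ bivariateGaussian_ne_zero hρ)) hs]

theorem isEquivalent_bivariateGaussian_Ioi_prod_Ioi {ι : Type*} {l : Filter ι} {ρ : ℝ}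
    {x y : ι → ℝ} (hρ : ρ ^ 2 < 1) (hα : Tendsto (fun i => phiRhoRate ρ (x i) (y i)) l atTop)
    (hβ : Tendsto (fun i => phiRhoRate ρ (y i) (x i)) l atTop) :
    (fun i => (bivariateGaussian ρ (Ioi (x i) ×ˢ Ioi (y i))).toReal) ~[l]
      fun i => phiRho ρ (x i) (y i) / (phiRhoRate ρ (x i) (y i) * phiRhoRate ρ (y i) (x i)) := by
  have herr : Tendsto (fun i => 1 - 2 / (1 - ρ ^ 2) *
      ((phiRhoRate ρ (x i) (y i))⁻¹ ^ 2 + (phiRhoRate ρ (y i) (x i))⁻¹ ^ 2)) l (𝓝 1) := by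
    simpa using tendsto_const_nhds.sub (tendsto_const_nhds.mul
      ((hα.inv_tendsto_atTop.pow 2).add (hβ.inv_tendsto_atTop.pow 2)))
  refine isEquivalent_of_tendsto_one
    (tendsto_of_tendsto_of_tendsto_of_le_of_le' herr tendsto_const_nhds ?_ ?_) <;>
    filter_upwards [hα.eventually_gt_atTop 0, hβ.eventually_gt_atTop 0] with i hαi hβi
  · exact (le_div_iff₀' (div_pos (phiRho_pos hρ _ _) (mul_pos hαi hβi))).2
      (le_toReal_bivariateGaussian_Ioi_prod_Ioi hρ hαi hβi)
  · exact div_le_one_of_le₀ (toReal_bivariateGaussian_Ioi_prod_Ioi_le hρ hαi hβi)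
      (div_pos (phiRho_pos hρ _ _) (mul_pos hαi hβi)).le

theorem gaussian_vector_tail_a_gt_rho_general
    {Ω : Type*} [MeasurableSpace Ω] (P : Measure Ω)
    (ρ : ℝ) (hρ : ρ ∈ Set.Ioo (-1 : ℝ) 1)
    (X₁ X₂ : Ω → ℝ)
    (hmap : P.map (fun ω => (X₁ ω, X₂ ω)) =
      volume.withDensity fun p : ℝ × ℝ => ENNReal.ofReal (phiRho ρ p.1 p.2))
    (c₁ c₂ a : ℝ) (ha : a ∈ Set.Ioc ρ 1)
    (lam₁ lam₂ : ℝ)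
    (hlam₁ : lam₁ = (1 - a * ρ) / (1 - ρ ^ 2))
    (hlam₂ : lam₂ = (a - ρ) / (1 - ρ ^ 2)) :
    Tendsto (fun u => (P {ω | X₁ ω > u + c₁ ∧ X₂ ω > a * u + c₂}).toReal /
        (phiRho ρ (u + c₁) (a * u + c₂) / (lam₁ * lam₂ * u ^ 2)))
      atTop (nhds 1) := by
  obtain ⟨hρ₁, hρ₂⟩ := hρ
  obtain ⟨haρ, ha₁⟩ := ha
  have hρsq : ρ ^ 2 < 1 := by nlinarith
  have hlam₁_pos : 0 < lam₁ := hlam₁ ▸ div_pos (by nlinarith) (by linarith)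
  have hlam₂_pos : 0 < lam₂ := hlam₂ ▸ div_pos (by linarith) (by linarith)
  have hrate₁ : phiRhoRate ρ 1 a = lam₁ := by rw [hlam₁, phiRhoRate]; ring
  have hrate₂ : phiRhoRate ρ a 1 = lam₂ := by rw [hlam₂, phiRhoRate]; ring
  have h₁ := isEquivalent_phiRhoRate_mul_add_mul_add (hrate₁ ▸ hlam₁_pos.ne') c₁ c₂
  have h₂ := isEquivalent_phiRhoRate_mul_add_mul_add (hrate₂ ▸ hlam₂_pos.ne') c₂ c₁
  simp only [one_mul, hrate₁, hrate₂] at h₁ h₂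
  have hT := (isEquivalent_bivariateGaussian_Ioi_prod_Ioi hρsq
    (h₁.symm.tendsto_atTop (tendsto_id.const_mul_atTop hlam₁_pos))
    (h₂.symm.tendsto_atTop (tendsto_id.const_mul_atTop hlam₂_pos))).trans
    (IsEquivalent.refl.div (h₁.mul h₂))
  have hprob : ∀ u, P {ω | X₁ ω > u + c₁ ∧ X₂ ω > a * u + c₂} =
      bivariateGaussian ρ (Ioi (u + c₁) ×ˢ Ioi (a * u + c₂)) := fun _ =>
    measure_preimage_eq_bivariateGaussian hρsq hmap (measurableSet_Ioi.prod measurableSet_Ioi)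
  simp only [hprob]
  refine (isEquivalent_iff_tendsto_one ?_).1 (hT.congr_right ?_)
  · filter_upwards [eventually_gt_atTop 0] with u hu
    exact div_ne_zero (phiRho_pos hρsq _ _).ne' (by positivity)
  · exact .of_forall fun u => by simp only [Pi.div_apply, Pi.mul_apply]; ring

/-- Lemma (Appendix, i): tail asymptotics of a bivariate Gaussian vector,
case `a ∈ (ρ, 1]`. -/
theorem gaussian_vector_tail_a_gt_rho
    {Ω : Type*} [MeasurableSpace Ω] (P : Measure Ω) [IsProbabilityMeasure P]
    (ρ : ℝ) (hρ : ρ ∈ Set.Ioo (-1 : ℝ) 1)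
    (X₁ X₂ : Ω → ℝ)
    (hmap : P.map (fun ω => (X₁ ω, X₂ ω)) =
      volume.withDensity fun p : ℝ × ℝ => ENNReal.ofReal (phiRho ρ p.1 p.2))
    (c₁ c₂ a : ℝ) (ha : a ∈ Set.Ioc ρ 1)
    (lam₁ lam₂ : ℝ)
    (hlam₁ : lam₁ = (1 - a * ρ) / (1 - ρ ^ 2))
    (hlam₂ : lam₂ = (a - ρ) / (1 - ρ ^ 2)) :
    Tendsto (fun u => (P {ω | X₁ ω > u + c₁ ∧ X₂ ω > a * u + c₂}).toReal /
        (phiRho ρ (u + c₁) (a * u + c₂) / (lam₁ * lam₂ * u ^ 2)))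
      atTop (nhds 1) :=
  gaussian_vector_tail_a_gt_rho_general P ρ hρ X₁ X₂ hmap c₁ c₂ a ha lam₁ lam₂ hlam₁ hlam₂
end
end

section
/- Let $(X_1, X_2)$ be a centered bivariate Gaussian vector with unit variances and correlation $\rho \in (-1,1)$, with joint density $\varphi_\rho$. Let $c_1, c_2$ be real constants and $a \le \rho$. Then as $u \to \infty$, $\mathbb{P}(X_1 > u + c_1, X_2 > au + c_2) \sim \sqrt{2\pi(1-\rho^2)} \, \Phi^*(c_1\rho - c_2) \, e^{\frac{(c_2 - \rho c_1)^2}{2(1-\rho^2)}} \, u^{-1} \varphi_\rho(u + c_1, \rho u + c_2)$, where $\Phi^*(c_1\rho - c_2) = 1$ when $a < \rho$, and when $a = \rho$, $\Phi^*$ is the distribution function of $\sqrt{1-\rho^2}\, X_1$ (i.e., a centered Gaussian with variance $1-\rho^2$). -/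
/-!
Conditionally on `X₁ = x`, `X₂` is Gaussian with mean `ρ x` and variance `1 - ρ²`, so with `F`
the distribution function of `N(0, 1 - ρ²)`,
`P(X₁ > u + c₁, X₂ > a u + c₂) = ∫_{x > u + c₁} φ(x) F(ρ x - a u - c₂) dx`.
The substitution `x = u + c₁ + s / u` turns `u / φ(u + c₁)` times this integral into
`∫_{s > 0} exp(-(s + c₁ s / u + s² / (2 u²))) F((ρ - a) u + ρ c₁ - c₂ + ρ s / u) ds`,
which tends to `Φ*` by dominated convergence: the argument of `F` tends to `+∞` if `a < ρ` and
to `ρ c₁ - c₂` if `a = ρ`. Finally `√(2π(1 - ρ²)) exp((c₂ - ρ c₁)² / (2(1 - ρ²)))` times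
`φ_ρ(u + c₁, ρ u + c₂)` is exactly `φ(u + c₁)`.
-/

open MeasureTheory ProbabilityTheory Filter Set
open scoped ENNReal NNReal

noncomputable section

open scoped Topology

lemma ProbabilityTheory.continuous_cdf (μ : Measure ℝ) [IsProbabilityMeasure μ]
    [NullSingletonClass μ] : Continuous (cdf μ) := by
  refine continuous_iff_continuousAt.2 fun x => ?_
  rw [(monotone_cdf μ).continuousAt_iff_leftLim_eq_rightLim, StieltjesFunction.rightLim_eq]
  have hx := (cdf μ).measure_singleton x
  rw [measure_cdf, measure_singleton, eq_comm, ENNReal.ofReal_eq_zero, sub_nonpos] at hx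
  exact le_antisymm ((monotone_cdf μ).leftLim_le le_rfl) hx

lemma ProbabilityTheory.cdf_gaussianReal_pos {v : ℝ≥0} (hv : v ≠ 0) (x : ℝ) :
    0 < cdf (gaussianReal 0 v) x := by
  rw [← ENNReal.ofReal_pos, ofReal_cdf, pos_iff_ne_zero]
  exact fun h => by simpa using gaussianReal_absolutelyContinuous' 0 hv h

lemma ProbabilityTheory.gaussianReal_Ioi_eq_ofReal_cdf (μ : ℝ) {v : ℝ≥0} (hv : v ≠ 0) (b : ℝ) :
    gaussianReal μ v (Ioi b) = ENNReal.ofReal (cdf (gaussianReal 0 v) (μ - b)) := by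
  have := nullSingletonClass_gaussianReal (μ := μ) hv
  rw [ofReal_cdf, ← sub_self μ, ← gaussianReal_map_const_sub,
    Measure.map_apply (by fun_prop) measurableSet_Iic, measure_congr Ioi_ae_eq_Ici]
  congr 1
  ext y
  simp

lemma phiRho_eq_gaussianPDFReal_mul {ρ : ℝ} (hρ : ρ ^ 2 < 1) (x y : ℝ) :
    phiRho ρ x y =
      gaussianPDFReal 0 1 x * gaussianPDFReal (ρ * x) (1 - ρ ^ 2).toNNReal y := by
  have hv : 0 < 1 - ρ ^ 2 := by linarith
  rw [phiRho, gaussianPDFReal, gaussianPDFReal, Real.coe_toNNReal _ hv.le, mul_mul_mul_comm,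
    ← Real.exp_add, NNReal.coe_one, mul_one]
  congr 1
  · rw [Real.sqrt_mul (x := 2 * Real.pi) (by positivity), ← mul_inv, ← mul_assoc,
      Real.mul_self_sqrt (by positivity), one_div]
  · congr 1
    field_simp
    ring

lemma withDensity_phiRho_prod {ρ : ℝ} (hρ : ρ ^ 2 < 1) {s t : Set ℝ}
    (hs : MeasurableSet s) (ht : MeasurableSet t) :
    volume.withDensity (fun p : ℝ × ℝ => ENNReal.ofReal (phiRho ρ p.1 p.2)) (s ×ˢ t) =
      ∫⁻ x in s, ENNReal.ofReal (gaussianPDFReal 0 1 x) *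
        gaussianReal (ρ * x) (1 - ρ ^ 2).toNNReal t := by
  have hv : (1 - ρ ^ 2).toNNReal ≠ 0 := by simpa using hρ
  have hmeas : Measurable fun p : ℝ × ℝ => ENNReal.ofReal (phiRho ρ p.1 p.2) := by
    unfold phiRho; fun_prop
  rw [withDensity_apply _ (hs.prod ht), Measure.volume_eq_prod, ← Measure.prod_restrict,
    lintegral_prod _ hmeas.aemeasurable]
  refine lintegral_congr fun x => ?_
  simp_rw [phiRho_eq_gaussianPDFReal_mul hρ, ENNReal.ofReal_mul (gaussianPDFReal_nonneg _ _ _)]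
  rw [lintegral_const_mul _ (measurable_gaussianPDFReal _ _).ennreal_ofReal,
    gaussianReal_apply _ hv]
  rfl

lemma isProbabilityMeasure_withDensity_phiRho {ρ : ℝ} (hρ : ρ ^ 2 < 1) :
    IsProbabilityMeasure
      (volume.withDensity fun p : ℝ × ℝ => ENNReal.ofReal (phiRho ρ p.1 p.2)) := by
  constructor
  rw [← univ_prod_univ, withDensity_phiRho_prod hρ .univ .univ]
  simp [lintegral_gaussianPDFReal_eq_one]

lemma toReal_withDensity_phiRho_Ioi_prod_Ioi {ρ : ℝ} (hρ : ρ ^ 2 < 1) (b₁ b₂ : ℝ) :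
    (volume.withDensity (fun p : ℝ × ℝ => ENNReal.ofReal (phiRho ρ p.1 p.2))
        (Ioi b₁ ×ˢ Ioi b₂)).toReal =
      ∫ x in Ioi b₁,
        gaussianPDFReal 0 1 x * cdf (gaussianReal 0 (1 - ρ ^ 2).toNNReal) (ρ * x - b₂) := by
  have hv : (1 - ρ ^ 2).toNNReal ≠ 0 := by simpa using hρ
  rw [withDensity_phiRho_prod hρ measurableSet_Ioi measurableSet_Ioi,
    integral_eq_lintegral_of_nonneg_ae (ae_of_all _ fun x =>
      mul_nonneg (gaussianPDFReal_nonneg _ _ _) (cdf_nonneg _ _))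
    ((measurable_gaussianPDFReal 0 1).mul
      ((monotone_cdf _).measurable.comp (by fun_prop))).aestronglyMeasurable]
  simp_rw [gaussianReal_Ioi_eq_ofReal_cdf _ hv,
    ENNReal.ofReal_mul (gaussianPDFReal_nonneg _ _ _)]

lemma toReal_measure_gt_and_gt_of_map_eq {Ω : Type*} [MeasurableSpace Ω] {P : Measure Ω}
    {ρ : ℝ} (hρ : ρ ^ 2 < 1) {X₁ X₂ : Ω → ℝ}
    (hmap : P.map (fun ω => (X₁ ω, X₂ ω)) =
      volume.withDensity fun p : ℝ × ℝ => ENNReal.ofReal (phiRho ρ p.1 p.2)) (b₁ b₂ : ℝ) :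
    (P {ω | X₁ ω > b₁ ∧ X₂ ω > b₂}).toReal =
      ∫ x in Ioi b₁,
        gaussianPDFReal 0 1 x * cdf (gaussianReal 0 (1 - ρ ^ 2).toNNReal) (ρ * x - b₂) := by
  have := isProbabilityMeasure_withDensity_phiRho hρ
  have hX : AEMeasurable (fun ω => (X₁ ω, X₂ ω)) P :=
    .of_map_ne_zero (hmap ▸ IsProbabilityMeasure.ne_zero _)
  rw [← toReal_withDensity_phiRho_Ioi_prod_Ioi hρ, ← hmap,
    Measure.map_apply_of_aemeasurable hX (measurableSet_Ioi.prod measurableSet_Ioi)]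
  rfl

lemma gaussianPDFReal_add_div_eq_mul_exp (c : ℝ) {u : ℝ} (hu : u ≠ 0) (s : ℝ) :
    gaussianPDFReal 0 1 (u + c + s / u) =
      gaussianPDFReal 0 1 (u + c) * Real.exp (-(s + c * s / u + s ^ 2 / (2 * u ^ 2))) := by
  simp only [gaussianPDFReal, NNReal.coe_one, mul_assoc, ← Real.exp_add]
  congr 2
  field_simp
  ring

lemma mul_integral_Ioi_gaussianPDFReal_mul (g : ℝ → ℝ) (c : ℝ) {u : ℝ} (hu : 0 < u) :
    u * ∫ x in Ioi (u + c), gaussianPDFReal 0 1 x * g x =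
      gaussianPDFReal 0 1 (u + c) *
        ∫ s in Ioi 0, Real.exp (-(s + c * s / u + s ^ 2 / (2 * u ^ 2))) * g (u + c + s / u) := by
  have himage : (fun s => u + c + s / u) '' Ioi 0 = Ioi (u + c) := by
    ext x
    constructor
    · rintro ⟨s, hs, rfl⟩
      simpa using div_pos hs hu
    · intro hx
      refine ⟨(x - (u + c)) * u, mul_pos (sub_pos.2 hx) hu, ?_⟩
      field_simp
      ring
  rw [← himage, integral_image_eq_integral_abs_deriv_smul measurableSet_Ioi
    (fun s _ => (((hasDerivAt_id' s).div_const u).const_add (u + c)).hasDerivWithinAt)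
    (fun s _ t _ h => by simpa [hu.ne'] using h), ← integral_const_mul, ← integral_const_mul]
  refine setIntegral_congr_fun measurableSet_Ioi fun s _ => ?_
  rw [gaussianPDFReal_add_div_eq_mul_exp c hu.ne', smul_eq_mul, abs_of_pos (by positivity)]
  field_simp

lemma tendsto_integral_Ioi_exp_mul (c L C : ℝ) {g : ℝ → ℝ → ℝ}
    (hmeas : ∀ u, AEStronglyMeasurable (g u) (volume.restrict (Ioi 0)))
    (hbound : ∀ u s, |g u s| ≤ C) (hlim : ∀ s > 0, Tendsto (fun u => g u s) atTop (𝓝 L)) :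
    Tendsto (fun u => ∫ s in Ioi 0, Real.exp (-(s + c * s / u + s ^ 2 / (2 * u ^ 2))) * g u s)
      atTop (𝓝 L) := by
  have hL : ∫ s in Ioi (0 : ℝ), Real.exp (-s) * L = L := by
    rw [integral_mul_const, integral_exp_neg_Ioi_zero, one_mul]
  rw [← hL]
  refine tendsto_integral_filter_of_dominated_convergence (fun s => C * Real.exp (-(1 / 2) * s))
    (Eventually.of_forall fun u => (by fun_prop : Measurable _).aestronglyMeasurable.mul (hmeas u))
    ?_ ((exp_neg_integrableOn_Ioi 0 (by norm_num)).const_mul C) ?_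
  · filter_upwards [eventually_ge_atTop (max 1 (2 * |c|))] with u hu
    have hu0 : 0 < u := lt_of_lt_of_le one_pos (le_of_max_le_left hu)
    refine (ae_restrict_iff' measurableSet_Ioi).2 (ae_of_all _ fun s (hs : 0 < s) => ?_)
    have hcs : |c * s / u| ≤ s / 2 := by
      rw [abs_div, abs_mul, abs_of_pos hs, abs_of_pos hu0, div_le_iff₀ hu0]
      nlinarith [le_of_max_le_right hu]
    have hexp : Real.exp (-(s + c * s / u + s ^ 2 / (2 * u ^ 2))) ≤ Real.exp (-(1 / 2) * s) := by
      gcongr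
      have hsq : 0 ≤ s ^ 2 / (2 * u ^ 2) := by positivity
      linarith [neg_abs_le (c * s / u)]
    rw [norm_mul, Real.norm_of_nonneg (Real.exp_nonneg _), mul_comm C]
    exact mul_le_mul hexp (hbound u s) (norm_nonneg _) (Real.exp_nonneg _)
  · refine (ae_restrict_iff' measurableSet_Ioi).2 (ae_of_all _ fun s (hs : 0 < s) => ?_)
    refine Tendsto.mul ((Real.continuous_exp.tendsto _).comp ?_) (hlim s hs)
    have h1 : Tendsto (fun u : ℝ => c * s / u) atTop (𝓝 0) :=
      tendsto_const_nhds.div_atTop tendsto_id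
    have h2 : Tendsto (fun u : ℝ => s ^ 2 / (2 * u ^ 2)) atTop (𝓝 0) :=
      tendsto_const_nhds.div_atTop ((tendsto_pow_atTop two_ne_zero).const_mul_atTop two_pos)
    simpa using ((tendsto_const_nhds (x := s)).add h1 |>.add h2).neg

lemma tendsto_mul_integral_Ioi_gaussianPDFReal_mul_div (c L C : ℝ) {G : ℝ → ℝ → ℝ}
    (hmeas : ∀ u, Measurable (G u)) (hbound : ∀ u x, |G u x| ≤ C)
    (hlim : ∀ s > 0, Tendsto (fun u => G u (u + c + s / u)) atTop (𝓝 L)) :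
    Tendsto (fun u => u * (∫ x in Ioi (u + c), gaussianPDFReal 0 1 x * G u x) /
      gaussianPDFReal 0 1 (u + c)) atTop (𝓝 L) := by
  refine (tendsto_integral_Ioi_exp_mul c L C (g := fun u s => G u (u + c + s / u))
    (fun u => ((hmeas u).comp (by fun_prop)).aestronglyMeasurable)
    (fun u s => hbound u _) hlim).congr' ?_
  filter_upwards [eventually_gt_atTop 0] with u hu
  rw [mul_integral_Ioi_gaussianPDFReal_mul _ c hu,
    mul_div_cancel_left₀ _ (gaussianPDFReal_pos _ _ _ one_ne_zero).ne']

lemma ProbabilityTheory.tendsto_cdf_mul_add_add_div (μ : Measure ℝ) [IsProbabilityMeasure μ]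
    [NullSingletonClass μ] {k : ℝ} (hk : 0 ≤ k) (d e : ℝ) :
    Tendsto (fun u => cdf μ (k * u + d + e / u)) atTop
      (𝓝 (if 0 < k then 1 else cdf μ d)) := by
  have he : Tendsto (fun u : ℝ => e / u) atTop (𝓝 0) := tendsto_const_nhds.div_atTop tendsto_id
  split_ifs with hk'
  · exact (tendsto_cdf_atTop μ).comp <| (tendsto_atTop_add_const_right _ d
      (tendsto_id.const_mul_atTop hk')).atTop_add he
  · obtain rfl : k = 0 := le_antisymm (not_lt.1 hk') hk
    have hd : Tendsto (fun u : ℝ => 0 * u + d + e / u) atTop (𝓝 d) := by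
      simpa using he.const_add d
    exact ((continuous_cdf μ).tendsto d).comp hd

lemma sqrt_mul_exp_mul_phiRho {ρ : ℝ} (hρ : ρ ^ 2 < 1) (x y : ℝ) :
    Real.sqrt (2 * Real.pi * (1 - ρ ^ 2)) * Real.exp ((y - ρ * x) ^ 2 / (2 * (1 - ρ ^ 2))) *
      phiRho ρ x y = gaussianPDFReal 0 1 x := by
  have hv : 0 < 1 - ρ ^ 2 := by linarith
  have hpdf : gaussianPDFReal (ρ * x) (1 - ρ ^ 2).toNNReal y =
      (Real.sqrt (2 * Real.pi * (1 - ρ ^ 2)))⁻¹ *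
        Real.exp (-((y - ρ * x) ^ 2 / (2 * (1 - ρ ^ 2)))) := by
    rw [gaussianPDFReal, Real.coe_toNNReal _ hv.le, neg_div]
  have hsqrt : Real.sqrt (2 * Real.pi * (1 - ρ ^ 2)) ≠ 0 := by positivity
  rw [phiRho_eq_gaussianPDFReal_mul hρ, hpdf, Real.exp_neg]
  field_simp

theorem gaussian_vector_tail_a_le_rho_general
    {Ω : Type*} [MeasurableSpace Ω] (P : Measure Ω)
    (ρ : ℝ) (hρ : ρ ∈ Set.Ioo (-1 : ℝ) 1)
    (X₁ X₂ : Ω → ℝ)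
    (hmap : P.map (fun ω => (X₁ ω, X₂ ω)) =
      volume.withDensity fun p : ℝ × ℝ => ENNReal.ofReal (phiRho ρ p.1 p.2))
    (c₁ c₂ a : ℝ) (ha : a ≤ ρ)
    (Φs : ℝ)
    (hΦs : Φs = if a < ρ then (1 : ℝ)
      else (gaussianReal 0 (1 - ρ ^ 2).toNNReal (Set.Iic (c₁ * ρ - c₂))).toReal) :
    Tendsto (fun u => (P {ω | X₁ ω > u + c₁ ∧ X₂ ω > a * u + c₂}).toReal /
        (Real.sqrt (2 * Real.pi * (1 - ρ ^ 2)) * Φs *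
          Real.exp ((c₂ - ρ * c₁) ^ 2 / (2 * (1 - ρ ^ 2))) *
          (phiRho ρ (u + c₁) (ρ * u + c₂) / u)))
      atTop (nhds 1) := by
  have hρ2 : ρ ^ 2 < 1 := by rwa [sq_lt_one_iff_abs_lt_one, abs_lt]
  have hv : (1 - ρ ^ 2).toNNReal ≠ 0 := by simpa using hρ2
  have := nullSingletonClass_gaussianReal (μ := 0) hv
  have hP (u : ℝ) := toReal_measure_gt_and_gt_of_map_eq hρ2 hmap (u + c₁) (a * u + c₂)
  set N := gaussianReal 0 (1 - ρ ^ 2).toNNReal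
  have hΦ : Φs = if 0 < ρ - a then 1 else cdf N (ρ * c₁ - c₂) := by
    simp_rw [hΦs, sub_pos, cdf_eq_real, measureReal_def, mul_comm ρ c₁]
  have hΦpos : 0 < Φs := by
    rw [hΦ]
    split_ifs
    exacts [one_pos, cdf_gaussianReal_pos hv _]
  have hlim := tendsto_mul_integral_Ioi_gaussianPDFReal_mul_div c₁ Φs 1
    (G := fun u x => cdf N (ρ * x - (a * u + c₂)))
    (fun u => (monotone_cdf N).measurable.comp (by fun_prop))
    (fun u x => abs_le.2 ⟨by linarith [cdf_nonneg N (ρ * x - (a * u + c₂))], cdf_le_one _ _⟩)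
    (fun s _ => hΦ ▸ (tendsto_cdf_mul_add_add_div N (sub_nonneg.2 ha) (ρ * c₁ - c₂) (ρ * s)).congr
      fun u => by congr 1; ring)
  have hratio := hlim.div_const Φs
  rw [div_self hΦpos.ne'] at hratio
  refine hratio.congr' ?_
  filter_upwards [eventually_gt_atTop 0] with u hu
  have hshift : c₂ - ρ * c₁ = ρ * u + c₂ - ρ * (u + c₁) := by ring
  rw [hP, hshift, mul_right_comm _ Φs, mul_comm _ Φs, mul_assoc Φs, mul_div_assoc',
    sqrt_mul_exp_mul_phiRho hρ2]
  field_simp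

/-- Lemma (Appendix, ii): tail asymptotics of a bivariate Gaussian vector,
case `a ≤ ρ`. -/
theorem gaussian_vector_tail_a_le_rho
    {Ω : Type*} [MeasurableSpace Ω] (P : Measure Ω) [IsProbabilityMeasure P]
    (ρ : ℝ) (hρ : ρ ∈ Set.Ioo (-1 : ℝ) 1)
    (X₁ X₂ : Ω → ℝ)
    (hmap : P.map (fun ω => (X₁ ω, X₂ ω)) =
      volume.withDensity fun p : ℝ × ℝ => ENNReal.ofReal (phiRho ρ p.1 p.2))
    (c₁ c₂ a : ℝ) (ha : a ≤ ρ)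
    (Φs : ℝ)
    (hΦs : Φs = if a < ρ then (1 : ℝ)
      else (gaussianReal 0 (1 - ρ ^ 2).toNNReal (Set.Iic (c₁ * ρ - c₂))).toReal) :
    Tendsto (fun u => (P {ω | X₁ ω > u + c₁ ∧ X₂ ω > a * u + c₂}).toReal /
        (Real.sqrt (2 * Real.pi * (1 - ρ ^ 2)) * Φs *
          Real.exp ((c₂ - ρ * c₁) ^ 2 / (2 * (1 - ρ ^ 2))) *
          (phiRho ρ (u + c₁) (ρ * u + c₂) / u)))
      atTop (nhds 1) :=
  gaussian_vector_tail_a_le_rho_general P ρ hρ X₁ X₂ hmap c₁ c₂ a ha Φs hΦs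
end
end
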